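/- arXiv:1803.02602 — 8 statements merged into one kernel-verified Lean document; each statement's English description precedes it below -/
import Mathlib

section
/- Let A : U → U' be a linear operator, b ∈ U', u the solution of A u = b, and u_r ∈ U_r the Galerkin projection onto a subspace U_r (i.e., ⟨b - A u_r, w⟩ = 0 for all w ∈ U_r). Define α_r = min over nonzero x ∈ U_r of ‖A x‖_{U_r'}/‖x‖_U and β_r = max over nonzero x ∈ span{u} + U_r of ‖A x‖_{U_r'}/‖x‖_U, where ‖y‖_{U_r'} = max over nonzero w ∈ U_r of |⟨y,w⟩|/‖w‖_U. If α_r > 0, then ‖u − u_r‖_U ≤ (1 + β_r/α_r) ‖u − P_{U_r} u‖_U, where P_{U_r} is the orthogonal projection onto U_r. -/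
/-!
For any `p ∈ Ur`, the triangle inequality gives `‖u - ur‖ ≤ ‖u - p‖ + ‖p - ur‖`. By Galerkin
orthogonality, `A (p - ur)` and `A (p - u)` act identically on `Ur`, so the stability constant
`α` on `Ur` and the continuity constant `β` on `span {u} ⊔ Ur` give
`α ‖p - ur‖ ≤ ‖A (p - ur)‖_{Ur'} = ‖A (p - u)‖_{Ur'} ≤ β ‖u - p‖`.
-/

open Matrix BigOperators

noncomputable section

/-- Inner product induced by `R`: `⟨x,y⟩_U = ⟨R x, y⟩`. -/
def ipR {n : ℕ} (R : Matrix (Fin n) (Fin n) ℝ) (x y : Fin n → ℝ) : ℝ :=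
  R.mulVec x ⬝ᵥ y

/-- Norm induced by `R`. -/
def normR {n : ℕ} (R : Matrix (Fin n) (Fin n) ℝ) (x : Fin n → ℝ) : ℝ :=
  Real.sqrt (ipR R x x)

/-- Euclidean norm. -/
def norm2 {m : ℕ} (v : Fin m → ℝ) : ℝ :=
  Real.sqrt (v ⬝ᵥ v)

/-- Dual norm `‖y‖_{U'}` induced by `⟨·, R⁻¹ ·⟩`. -/
def normDual {n : ℕ} (R : Matrix (Fin n) (Fin n) ℝ) (y : Fin n → ℝ) : ℝ :=
  Real.sqrt (y ⬝ᵥ R⁻¹.mulVec y)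

/-- Dual seminorm `‖y‖_{Z'} = sup_{w ∈ Z, w ≠ 0} |⟨y,w⟩|/‖w‖_U`. -/
def dualSemi {n : ℕ} (R : Matrix (Fin n) (Fin n) ℝ) (Z : Submodule ℝ (Fin n → ℝ))
    (y : Fin n → ℝ) : ℝ :=
  ⨆ w : Z, |y ⬝ᵥ (w : Fin n → ℝ)| / normR R (w : Fin n → ℝ)

/-- Sketched dual seminorm `‖y‖_{Z'}^Θ = sup_{w ∈ Z, w ≠ 0} |⟨Θ R⁻¹ y, Θ w⟩|/‖Θ w‖`. -/
def skDualSemi {n k : ℕ} (R : Matrix (Fin n) (Fin n) ℝ) (Θ : Matrix (Fin k) (Fin n) ℝ)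
    (Z : Submodule ℝ (Fin n → ℝ)) (y : Fin n → ℝ) : ℝ :=
  ⨆ w : Z, |(Θ.mulVec (R⁻¹.mulVec y)) ⬝ᵥ (Θ.mulVec (w : Fin n → ℝ))| /
      norm2 (Θ.mulVec (w : Fin n → ℝ))

/-- `i`-th column of a matrix as a vector. -/
def colV {n m : ℕ} (M : Matrix (Fin n) (Fin m) ℝ) (i : Fin m) : Fin n → ℝ :=
  fun j => M j i

/-- Squared Frobenius norm. -/
def frob2 {a b : ℕ} (M : Matrix (Fin a) (Fin b) ℝ) : ℝ :=
  ∑ i, ∑ j, (M i j) ^ 2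

section

variable {n : ℕ} {R : Matrix (Fin n) (Fin n) ℝ}

/- `normR R` is definitionally the seminorm that Mathlib attaches to a positive semidefinite
matrix. -/
lemma normR_add_le (hR : R.PosSemidef) (x y : Fin n → ℝ) :
    normR R (x + y) ≤ normR R x + normR R y :=
  @norm_add_le _ (R.toSeminormedAddCommGroup hR).toSeminormedAddGroup x y

lemma normR_sub_comm (x y : Fin n → ℝ) : normR R (x - y) = normR R (y - x) := by
  rw [normR, normR, ipR, ipR, ← neg_sub, mulVec_neg, neg_dotProduct, dotProduct_neg, neg_neg]

lemma dualSemi_congr {Z : Submodule ℝ (Fin n → ℝ)} {y y' : Fin n → ℝ}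
    (h : ∀ w ∈ Z, y ⬝ᵥ w = y' ⬝ᵥ w) : dualSemi R Z y = dualSemi R Z y' :=
  iSup_congr fun w => by rw [h w w.2]

lemma mul_normR_sub_le_of_galerkin {A : Matrix (Fin n) (Fin n) ℝ} {Ur : Submodule ℝ (Fin n → ℝ)}
    {u ur p : Fin n → ℝ} {α β : ℝ} (hGal : ∀ w ∈ Ur, A *ᵥ (u - ur) ⬝ᵥ w = 0)
    (hαb : ∀ x ∈ Ur, α * normR R x ≤ dualSemi R Ur (A *ᵥ x))
    (hβ : ∀ x ∈ Submodule.span ℝ {u} ⊔ Ur, dualSemi R Ur (A *ᵥ x) ≤ β * normR R x)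
    (hur : ur ∈ Ur) (hp : p ∈ Ur) : α * normR R (p - ur) ≤ β * normR R (u - p) :=
  calc α * normR R (p - ur) ≤ dualSemi R Ur (A *ᵥ (p - ur)) := hαb _ (Ur.sub_mem hp hur)
    _ = dualSemi R Ur (A *ᵥ (p - u)) := dualSemi_congr fun w hw => by
      rw [← sub_add_sub_cancel p u ur, mulVec_add, add_dotProduct, hGal w hw, add_zero]
    _ ≤ β * normR R (p - u) := hβ _ <| Submodule.sub_mem _ (Submodule.mem_sup_right hp)
      (Submodule.mem_sup_left (Submodule.mem_span_singleton_self u))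
    _ = β * normR R (u - p) := by rw [normR_sub_comm]

end

theorem cea_lemma_general {n : ℕ} (R A : Matrix (Fin n) (Fin n) ℝ) (hR : R.PosDef)
    (b u ur p : Fin n → ℝ) (Ur : Submodule ℝ (Fin n → ℝ)) (α β : ℝ)
    (hu : A.mulVec u = b) (hur : ur ∈ Ur)
    (hGal : ∀ w ∈ Ur, (b - A.mulVec ur) ⬝ᵥ w = 0)
    (hα : 0 < α)
    (hαb : ∀ x ∈ Ur, α * normR R x ≤ dualSemi R Ur (A.mulVec x))
    (hβ : ∀ x ∈ Submodule.span ℝ {u} ⊔ Ur, dualSemi R Ur (A.mulVec x) ≤ β * normR R x)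
    (hp : p ∈ Ur) :
    normR R (u - ur) ≤ (1 + β / α) * normR R (u - p) := by
  have hGal' : ∀ w ∈ Ur, A *ᵥ (u - ur) ⬝ᵥ w = 0 := by
    simpa only [mulVec_sub, hu] using hGal
  have hdiscrete : normR R (p - ur) ≤ β / α * normR R (u - p) := by
    rw [div_mul_eq_mul_div, le_div_iff₀ hα]
    linarith [mul_normR_sub_le_of_galerkin hGal' hαb hβ hur hp]
  calc normR R (u - ur) = normR R ((u - p) + (p - ur)) := by rw [sub_add_sub_cancel]
    _ ≤ normR R (u - p) + normR R (p - ur) := normR_add_le hR.posSemidef (u - p) (p - ur)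
    _ ≤ normR R (u - p) + β / α * normR R (u - p) := by gcongr
    _ = (1 + β / α) * normR R (u - p) := by ring

/-- Modified Cea's lemma for the Galerkin projection. -/
theorem cea_lemma {n : ℕ} (R A : Matrix (Fin n) (Fin n) ℝ) (hR : R.PosDef)
    (b u ur p : Fin n → ℝ) (Ur : Submodule ℝ (Fin n → ℝ)) (α β : ℝ)
    (hu : A.mulVec u = b) (hur : ur ∈ Ur)
    (hGal : ∀ w ∈ Ur, (b - A.mulVec ur) ⬝ᵥ w = 0)
    (hα : 0 < α)
    (hαb : ∀ x ∈ Ur, α * normR R x ≤ dualSemi R Ur (A.mulVec x))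
    (hβ : ∀ x ∈ Submodule.span ℝ {u} ⊔ Ur, dualSemi R Ur (A.mulVec x) ≤ β * normR R x)
    (hp : p ∈ Ur) (hporth : ∀ w ∈ Ur, ipR R (u - p) w = 0) :
    normR R (u - ur) ≤ (1 + β / α) * normR R (u - p) :=
  cea_lemma_general R A hR b u ur p Ur α β hu hur hGal hα hαb hβ hp
end
end

section
/- Let U_r ∈ K^{n×r} have columns that are orthonormal with respect to ⟨·,·⟩_U = ⟨R_U ·, ·⟩, and let A_r(μ) = U_r^H A(μ) U_r. Then the condition number of A_r(μ) (ratio of largest to smallest singular value) is bounded by β_r(μ)/α_r(μ), where α_r(μ) = min_{x ∈ range(U_r)\{0}} ‖A(μ)x‖_{U_r'}/‖x‖_U and β_r(μ) is the analogous maximum over span{u(μ)} + range(U_r). -/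
open Matrix BigOperators

noncomputable section

lemma norm2_nonneg {m : ℕ} (v : Fin m → ℝ) : 0 ≤ norm2 v := Real.sqrt_nonneg _

lemma dot_self_eq_sq' {m : ℕ} (v : Fin m → ℝ) : v ⬝ᵥ v = ∑ i, v i ^ 2 := by
  simp [dotProduct, sq]

lemma cauchy_schwarz_dot {m : ℕ} (x y : Fin m → ℝ) : |x ⬝ᵥ y| ≤ norm2 x * norm2 y := by
  have h1 : |x ⬝ᵥ y| = Real.sqrt ((x ⬝ᵥ y) ^ 2) := by rw [Real.sqrt_sq_eq_abs]
  rw [h1, norm2, norm2, dot_self_eq_sq', dot_self_eq_sq', ← Real.sqrt_mul (by positivity)]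
  exact Real.sqrt_le_sqrt (by simpa [dotProduct] using
    Finset.sum_mul_sq_le_sq_mul_sq Finset.univ x y)

lemma dot_mulVec_left {n r : ℕ} (U : Matrix (Fin n) (Fin r) ℝ) (y : Fin n → ℝ)
    (c : Fin r → ℝ) : y ⬝ᵥ U.mulVec c = Uᵀ.mulVec y ⬝ᵥ c := by
  rw [Matrix.dotProduct_mulVec, Matrix.mulVec_transpose]

lemma norm2_sq {m : ℕ} (v : Fin m → ℝ) : norm2 v ^ 2 = v ⬝ᵥ v := by
  rw [norm2, Real.sq_sqrt]
  rw [dot_self_eq_sq']; positivity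

lemma norm2_pos {m : ℕ} {v : Fin m → ℝ} (hv : v ≠ 0) : 0 < norm2 v := by
  rcases (norm2_nonneg v).lt_or_eq with h | h
  · exact h
  · exfalso; apply hv
    have h2 : v ⬝ᵥ v = 0 := by rw [← norm2_sq, ← h]; ring
    rw [dot_self_eq_sq'] at h2
    funext i
    have := (Finset.sum_eq_zero_iff_of_nonneg (fun i _ => sq_nonneg (v i))).mp h2 i
      (Finset.mem_univ i)
    exact pow_eq_zero_iff (by norm_num) |>.mp this

/-- The condition number of the reduced matrix `A_r = Uᵀ A U` (with `R`-orthonormal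
columns of `U`) is bounded by `β/α`: all singular values lie in `[α, β]`. -/
theorem reduced_matrix_conditioning {n r : ℕ} (R A : Matrix (Fin n) (Fin n) ℝ)
    (hR : R.PosDef) (b u : Fin n → ℝ) (hu : A.mulVec u = b)
    (U : Matrix (Fin n) (Fin r) ℝ)
    (hortho : ∀ i j : Fin r, ipR R (colV U i) (colV U j) = if i = j then 1 else 0)
    (α β : ℝ)
    (hα : ∀ x ∈ LinearMap.range U.mulVecLin,
      α * normR R x ≤ dualSemi R (LinearMap.range U.mulVecLin) (A.mulVec x))
    (hβ : ∀ x ∈ Submodule.span ℝ {u} ⊔ LinearMap.range U.mulVecLin,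
      dualSemi R (LinearMap.range U.mulVecLin) (A.mulVec x) ≤ β * normR R x) :
    ∀ a : Fin r → ℝ,
      α * norm2 a ≤ norm2 ((Uᵀ * A * U).mulVec a) ∧
      norm2 ((Uᵀ * A * U).mulVec a) ≤ β * norm2 a := by
  set Z := LinearMap.range U.mulVecLin with hZ
  -- Uᵀ R U = 1
  have h1 : Uᵀ * R * U = 1 := by
    ext i j
    have h := hortho j i
    simp only [ipR, colV, Matrix.mulVec, dotProduct] at h
    simp only [Matrix.mul_apply, Matrix.one_apply, Matrix.transpose_apply]
    calc ∑ k, (∑ l, U l i * R l k) * U k j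
        = ∑ k, ∑ l, U l i * R l k * U k j := by
          exact Finset.sum_congr rfl fun k _ => Finset.sum_mul ..
      _ = ∑ l, ∑ k, U l i * R l k * U k j := Finset.sum_comm
      _ = ∑ l, (∑ k, R l k * U k j) * U l i := by
          refine Finset.sum_congr rfl fun l _ => ?_
          rw [Finset.sum_mul]
          exact Finset.sum_congr rfl fun k _ => by ring
      _ = if j = i then 1 else 0 := h
      _ = if i = j then 1 else 0 := by
          by_cases hij : i = j <;> simp [hij, eq_comm]
  -- normR of U c equals norm2 c
  have hnorm : ∀ c : Fin r → ℝ, normR R (U.mulVec c) = norm2 c := by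
    intro c
    have : ipR R (U.mulVec c) (U.mulVec c) = c ⬝ᵥ c := by
      rw [ipR, Matrix.mulVec_mulVec, dot_mulVec_left, Matrix.mulVec_mulVec,
        ← Matrix.mul_assoc, h1, Matrix.one_mulVec]
    rw [normR, this, norm2]
  -- dual seminorm formula
  have hdual : ∀ y : Fin n → ℝ, dualSemi R Z y = norm2 (Uᵀ.mulVec y) := by
    intro y
    set N := norm2 (Uᵀ.mulVec y) with hN
    have hub : ∀ w : Z, |y ⬝ᵥ (w : Fin n → ℝ)| / normR R (w : Fin n → ℝ) ≤ N := by
      rintro ⟨wv, hw⟩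
      obtain ⟨c, rfl⟩ := hw
      simp only [Matrix.mulVecLin_apply]
      rw [hnorm, dot_mulVec_left]
      rcases eq_or_lt_of_le (norm2_nonneg c) with h0 | h0
      · have hc : c = 0 := by
          by_contra hc
          exact absurd (norm2_pos hc) (by rw [← h0]; exact lt_irrefl 0)
        rw [hc]
        simpa using norm2_nonneg (Uᵀ.mulVec y)
      · rw [div_le_iff₀ h0]
        exact (cauchy_schwarz_dot _ _)
    have hbdd : BddAbove (Set.range fun w : Z =>
        |y ⬝ᵥ (w : Fin n → ℝ)| / normR R (w : Fin n → ℝ)) := ⟨N, by rintro _ ⟨w, rfl⟩; exact hub w⟩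
    refine le_antisymm (ciSup_le hub) ?_
    by_cases hy : Uᵀ.mulVec y = 0
    · have : N = 0 := by rw [hN, hy, norm2]; simp [dotProduct]
      rw [this]
      have : (0 : ℝ) = |y ⬝ᵥ ((0 : Z) : Fin n → ℝ)| / normR R ((0 : Z) : Fin n → ℝ) := by
        simp
      rw [this]
      exact le_ciSup hbdd (0 : Z)
    · set c₀ := Uᵀ.mulVec y with hc₀
      have hw₀ : U.mulVec c₀ ∈ Z := ⟨c₀, rfl⟩
      have : N = |y ⬝ᵥ ((⟨U.mulVec c₀, hw₀⟩ : Z) : Fin n → ℝ)| /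
          normR R ((⟨U.mulVec c₀, hw₀⟩ : Z) : Fin n → ℝ) := by
        simp only
        rw [hnorm, dot_mulVec_left, ← hc₀]
        rw [abs_of_nonneg (by rw [dot_self_eq_sq']; positivity)]
        rw [← norm2_sq, sq]
        rw [mul_div_assoc, div_self (ne_of_gt (norm2_pos hy)), mul_one]
      rw [this]
      exact le_ciSup hbdd _
  -- main
  intro a
  have hxZ : U.mulVec a ∈ Z := ⟨a, rfl⟩
  have key : dualSemi R Z (A.mulVec (U.mulVec a)) = norm2 ((Uᵀ * A * U).mulVec a) := by
    rw [hdual]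
    congr 1
    rw [Matrix.mulVec_mulVec, Matrix.mulVec_mulVec, Matrix.mul_assoc]
  constructor
  · have := hα (U.mulVec a) hxZ
    rw [key, hnorm] at this
    exact this
  · have := hβ (U.mulVec a) (Submodule.mem_sup_right hxZ)
    rw [key, hnorm] at this
    exact this
end
end

section
/- Let u solve A u = b and u^du solve A^H u^du = −l. Given approximations u_r of u and u_r^du of u^du, define the primal-dual corrected output s_r^{pd} = ⟨l, u_r⟩ − ⟨u_r^du, r(u_r)⟩ where r(u_r) = b − A u_r. Then |⟨l, u⟩ − s_r^{pd}| ≤ ‖r^du(u_r^du)‖_{U'} · ‖u − u_r‖_U, where r^du(u_r^du) = −l − A^H u_r^du and ‖·‖_{U'} is the dual norm induced by ⟨·, R_U^{-1}·⟩. -/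
open Matrix BigOperators

noncomputable section

/-!
Since `A u = b`, the output error equals `-⟨r^du(u_r^du), u - u_r⟩`; the norm `‖·‖_{U'}` is dual to
`‖·‖_U`, so Cauchy–Schwarz for the inner product `⟨R_U ·, ·⟩` bounds this pairing by the product
of the two norms.
-/

theorem output_error_eq_neg_dualResidual_dotProduct {ι α : Type*} [Fintype ι] [CommRing α]
    {A : Matrix ι ι α} {b u : ι → α} (l urp urd : ι → α) (hu : A *ᵥ u = b) :
    l ⬝ᵥ u - (l ⬝ᵥ urp - urd ⬝ᵥ (b - A *ᵥ urp)) = -((-l - Aᵀ *ᵥ urd) ⬝ᵥ (u - urp)) := by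
  have hres : urd ⬝ᵥ (b - A *ᵥ urp) = (Aᵀ *ᵥ urd) ⬝ᵥ (u - urp) := by
    rw [← hu, ← mulVec_sub, dotProduct_mulVec, mulVec_transpose]
  rw [hres]
  simp only [sub_dotProduct, neg_dotProduct, dotProduct_sub]
  ring

theorem Matrix.PosSemidef.abs_mulVec_dotProduct_le {ι : Type*} [Fintype ι] {R : Matrix ι ι ℝ}
    (hR : R.PosSemidef) (x y : ι → ℝ) :
    |(R *ᵥ x) ⬝ᵥ y| ≤ √((R *ᵥ x) ⬝ᵥ x) * √((R *ᵥ y) ⬝ᵥ y) := by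
  let := R.toSeminormedAddCommGroup hR
  let := R.toInnerProductSpace hR
  exact (abs_real_inner_le_norm y x).trans_eq (mul_comm _ _)

theorem abs_dotProduct_le_normDual_mul_normR {n : ℕ} {R : Matrix (Fin n) (Fin n) ℝ}
    (hR : R.PosDef) (y e : Fin n → ℝ) : |y ⬝ᵥ e| ≤ normDual R y * normR R e := by
  have hRy : R *ᵥ (R⁻¹ *ᵥ y) = y := by
    rw [mulVec_mulVec, mul_nonsing_inv _ ((isUnit_iff_isUnit_det R).mp hR.isUnit), one_mulVec]
  -- Cauchy–Schwarz for `⟨R ·, ·⟩`, applied to the Riesz representative `R⁻¹ y` of `y`.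
  have := hR.posSemidef.abs_mulVec_dotProduct_le (R⁻¹ *ᵥ y) e
  rwa [hRy] at this

theorem primal_dual_correction_general {n : ℕ} (R A : Matrix (Fin n) (Fin n) ℝ)
    (hR : R.PosDef)
    (b l u urp urd : Fin n → ℝ)
    (hu : A.mulVec u = b) :
    |l ⬝ᵥ u - (l ⬝ᵥ urp - urd ⬝ᵥ (b - A.mulVec urp))| ≤
      normDual R (-l - Aᵀ.mulVec urd) * normR R (u - urp) := by
  rw [output_error_eq_neg_dualResidual_dotProduct l urp urd hu, abs_neg]
  exact abs_dotProduct_le_normDual_mul_normR hR _ _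

/-- Error bound for the primal-dual corrected output quantity. -/
theorem primal_dual_correction {n : ℕ} (R A : Matrix (Fin n) (Fin n) ℝ)
    (hR : R.PosDef) (hA : IsUnit A.det)
    (b l u udu urp urd : Fin n → ℝ)
    (hu : A.mulVec u = b) (hdu : Aᵀ.mulVec udu = -l) :
    |l ⬝ᵥ u - (l ⬝ᵥ urp - urd ⬝ᵥ (b - A.mulVec urp))| ≤
      normDual R (-l - Aᵀ.mulVec urd) * normR R (u - urp) :=
  primal_dual_correction_general R A hR b l u urp urd hu
end
end

section
/- Let Q ∈ K^{s×n} satisfy Q^H Q = R_U, let U_m ∈ K^{n×m} be a snapshot matrix with columns u(μ^i), and let B_r* be a best rank-r approximation of Q U_m in Frobenius norm. Then for any rank-r matrix B_r ∈ K^{s×m}, with U_r = {R_U^{-1} Q^H b : b ∈ span(B_r)}, one has (1/m)‖Q U_m − B_r*‖_F^2 ≤ (1/m) Σ_{i=1}^m ‖u(μ^i) − P_{U_r} u(μ^i)‖_U^2 ≤ (1/m)‖Q U_m − B_r‖_F^2. -/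
open Matrix BigOperators

noncomputable section

section AuxPOD

lemma ipR_eq' {n s : ℕ} {R : Matrix (Fin n) (Fin n) ℝ} {Q : Matrix (Fin s) (Fin n) ℝ}
    (hQ : Qᵀ * Q = R) (v w : Fin n → ℝ) :
    ipR R v w = Q.mulVec v ⬝ᵥ Q.mulVec w := by
  rw [ipR, ← hQ, ← Matrix.mulVec_mulVec, Matrix.mulVec_transpose, ← Matrix.dotProduct_mulVec,
    dotProduct_comm, Matrix.dotProduct_mulVec]

lemma ipR_self_nonneg' {n s : ℕ} {R : Matrix (Fin n) (Fin n) ℝ} {Q : Matrix (Fin s) (Fin n) ℝ}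
    (hQ : Qᵀ * Q = R) (v : Fin n → ℝ) : 0 ≤ ipR R v v := by
  rw [ipR_eq' hQ]; exact Finset.sum_nonneg fun i _ => mul_self_nonneg _

lemma normR_sq' {n s : ℕ} {R : Matrix (Fin n) (Fin n) ℝ} {Q : Matrix (Fin s) (Fin n) ℝ}
    (hQ : Qᵀ * Q = R) (v : Fin n → ℝ) : normR R v ^ 2 = ipR R v v :=
  Real.sq_sqrt (ipR_self_nonneg' hQ v)

lemma frob2_eq_sum_col {a b : ℕ} (M : Matrix (Fin a) (Fin b) ℝ) :
    frob2 M = ∑ j, colV M j ⬝ᵥ colV M j := by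
  rw [frob2, Finset.sum_comm]
  simp [colV, dotProduct, sq]

lemma colV_sub' {a b : ℕ} (M N : Matrix (Fin a) (Fin b) ℝ) (i : Fin b) :
    colV (M - N) i = colV M i - colV N i := rfl

lemma colV_mul' {a b c : ℕ} (A : Matrix (Fin a) (Fin b) ℝ) (B : Matrix (Fin b) (Fin c) ℝ)
    (i : Fin c) : colV (A * B) i = A.mulVec (colV B i) := by
  ext j; simp [colV, Matrix.mul_apply, Matrix.mulVec, dotProduct]

lemma dot_adj' {n s : ℕ} (Q : Matrix (Fin s) (Fin n) ℝ) (v : Fin n → ℝ) (w : Fin s → ℝ) :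
    Q.mulVec v ⬝ᵥ w = v ⬝ᵥ Qᵀ.mulVec w := by
  rw [Matrix.mulVec_transpose, dotProduct_comm v, ← Matrix.dotProduct_mulVec,
    dotProduct_comm]

lemma mulVec_single' {a b : ℕ} (M : Matrix (Fin a) (Fin b) ℝ) (i : Fin b) :
    M.mulVec (Pi.single i 1) = colV M i := by
  ext j; simp [Matrix.mulVec_single, colV]

end AuxPOD

/-- Quasi-optimality of the approximate POD subspace obtained from a rank-r
approximation of `Q U_m` (Proposition on approximate POD). -/
theorem approx_pod_bounds {n m s r : ℕ} (R : Matrix (Fin n) (Fin n) ℝ) (hR : R.PosDef)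
    (Q : Matrix (Fin s) (Fin n) ℝ) (hQ : Qᵀ * Q = R)
    (Um : Matrix (Fin n) (Fin m) ℝ)
    (Bstar Br : Matrix (Fin s) (Fin m) ℝ)
    (hBstarRank : Bstar.rank ≤ r)
    (hBstarBest : ∀ C : Matrix (Fin s) (Fin m) ℝ, C.rank ≤ r →
      frob2 (Q * Um - Bstar) ≤ frob2 (Q * Um - C))
    (hBrRank : Br.rank ≤ r)
    (p : Fin m → (Fin n → ℝ))
    (hpmem : ∀ i, p i ∈ LinearMap.range (R⁻¹ * Qᵀ * Br).mulVecLin)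
    (hporth : ∀ i, ∀ w ∈ LinearMap.range (R⁻¹ * Qᵀ * Br).mulVecLin,
      ipR R (colV Um i - p i) w = 0) :
    (1 / (m : ℝ)) * frob2 (Q * Um - Bstar) ≤
      (1 / (m : ℝ)) * ∑ i, (normR R (colV Um i - p i)) ^ 2 ∧
    (1 / (m : ℝ)) * ∑ i, (normR R (colV Um i - p i)) ^ 2 ≤
      (1 / (m : ℝ)) * frob2 (Q * Um - Br) := by
  classical
  have hm : (0:ℝ) ≤ 1 / (m:ℝ) := by positivity
  set M : Matrix (Fin n) (Fin m) ℝ := R⁻¹ * Qᵀ * Br with hMdef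
  have hRRinv : R * R⁻¹ = 1 := Matrix.mul_nonsing_inv R (isUnit_iff_ne_zero.mpr hR.det_pos.ne')
  -- the key sum/frobenius identity for any matrix P with columns p i
  set P : Matrix (Fin n) (Fin m) ℝ := fun j i => p i j with hPdef
  have hcolP : ∀ i, colV P i = p i := fun i => rfl
  have hcolQ : ∀ i, colV (Q * Um - Q * P) i = Q.mulVec (colV Um i - p i) := by
    intro i
    rw [colV_sub', colV_mul', colV_mul', hcolP, Matrix.mulVec_sub]
  have hsum : ∑ i, (normR R (colV Um i - p i)) ^ 2 = frob2 (Q * Um - Q * P) := by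
    rw [frob2_eq_sum_col]
    refine Finset.sum_congr rfl fun i _ => ?_
    rw [normR_sq' hQ, ipR_eq' hQ, hcolQ]
  constructor
  · -- lower bound: Q*P has rank ≤ r
    obtain ⟨w, hw⟩ : ∃ w : Fin m → (Fin m → ℝ), ∀ i, M.mulVec (w i) = p i := by
      choose w hw using fun i => hpmem i
      exact ⟨w, hw⟩
    set W : Matrix (Fin m) (Fin m) ℝ := fun j i => w i j with hWdef
    have hPW : P = M * W := by
      ext j i
      have : colV (M * W) i = M.mulVec (w i) := colV_mul' M W i
      have := congrFun this j
      rw [hw] at this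
      exact this.symm
    have hQP : Q * P = (Q * (R⁻¹ * Qᵀ)) * Br * W := by
      rw [hPW, hMdef]; simp only [Matrix.mul_assoc]
    have hrank : (Q * P).rank ≤ r := by
      rw [hQP]
      calc ((Q * (R⁻¹ * Qᵀ)) * Br * W).rank ≤ ((Q * (R⁻¹ * Qᵀ)) * Br).rank :=
            Matrix.rank_mul_le_left _ W
        _ ≤ Br.rank := Matrix.rank_mul_le_right _ Br
        _ ≤ r := hBrRank
    have := hBstarBest (Q * P) hrank
    rw [hsum]
    exact mul_le_mul_of_nonneg_left this hm
  · -- upper bound, columnwise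
    rw [frob2_eq_sum_col]
    refine mul_le_mul_of_nonneg_left (Finset.sum_le_sum fun i _ => ?_) hm
    set u := colV Um i with hu
    set b := colV Br i with hb
    set x := colV M i with hx
    have hxmem : x ∈ LinearMap.range M.mulVecLin := ⟨Pi.single i 1, mulVec_single' M i⟩
    have hxb : x = (R⁻¹ * Qᵀ).mulVec b := by
      rw [hx, hb, hMdef, colV_mul']
    have hRx : R.mulVec x = Qᵀ.mulVec b := by
      rw [hxb, Matrix.mulVec_mulVec, ← Matrix.mul_assoc, hRRinv, Matrix.one_mul]
    -- orthogonality of Q x - b to range of Q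
    have hQtQx : Qᵀ.mulVec (Q.mulVec x - b) = 0 := by
      rw [Matrix.mulVec_sub, Matrix.mulVec_mulVec, hQ, hRx, sub_self]
    -- step 1 : ‖u - p i‖² ≤ ‖u - x‖² (in U-norm)
    have step1 : ipR R (u - p i) (u - p i) ≤ ipR R (u - x) (u - x) := by
      have hdecomp : u - x = (u - p i) + (p i - x) := by abel
      have hmem' : p i - x ∈ LinearMap.range M.mulVecLin :=
        Submodule.sub_mem _ (hpmem i) hxmem
      have horth : ipR R (u - p i) (p i - x) = 0 := hporth i _ hmem'
      have horth' : ipR R (p i - x) (u - p i) = 0 := by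
        rw [ipR_eq' hQ, dotProduct_comm, ← ipR_eq' hQ, horth]
      have hexp : ipR R (u - x) (u - x) =
          ipR R (u - p i) (u - p i) + ipR R (p i - x) (p i - x) := by
        rw [hdecomp]
        simp only [ipR, Matrix.mulVec_add, add_dotProduct, dotProduct_add]
        have h1 : R.mulVec (u - p i) ⬝ᵥ (p i - x) = 0 := horth
        have h2 : R.mulVec (p i - x) ⬝ᵥ (u - p i) = 0 := horth'
        rw [h1, h2]; ring
      rw [hexp]
      have := ipR_self_nonneg' hQ (p i - x)
      linarith
    -- step 2 : ‖u - x‖_U² ≤ ‖Q u - b‖²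
    have step2 : ipR R (u - x) (u - x) ≤ (Q.mulVec u - b) ⬝ᵥ (Q.mulVec u - b) := by
      have hdecomp : Q.mulVec u - b = Q.mulVec (u - x) + (Q.mulVec x - b) := by
        rw [Matrix.mulVec_sub]; abel
      have hcross : Q.mulVec (u - x) ⬝ᵥ (Q.mulVec x - b) = 0 := by
        rw [dot_adj', hQtQx, dotProduct_zero]
      have hcross' : (Q.mulVec x - b) ⬝ᵥ Q.mulVec (u - x) = 0 := by
        rw [dotProduct_comm]; exact hcross
      have hnn : 0 ≤ (Q.mulVec x - b) ⬝ᵥ (Q.mulVec x - b) :=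
        Finset.sum_nonneg fun j _ => mul_self_nonneg _
      rw [ipR_eq' hQ, hdecomp]
      simp only [add_dotProduct, dotProduct_add, hcross, hcross']
      linarith
    have hcol : colV (Q * Um - Br) i = Q.mulVec u - b := by
      rw [colV_sub', colV_mul', hu, hb]
    rw [normR_sq' hQ, hcol]
    exact le_trans step1 step2
end
end

section
/- Let Θ be an X → ℓ2 ε-subspace embedding for Y, let Z ⊆ Y be a subspace, and for y' ∈ Y' define ‖y'‖_{Z'} = max_{x ∈ Z\{0}} |⟨y', x⟩|/‖x‖_X and ‖y'‖_{Z'}^Θ = max_{x ∈ Z\{0}} |⟨Θ R_X^{-1} y', Θ x⟩| / ‖Θ x‖. Then for all y' ∈ Y': (1/√(1+ε))(‖y'‖_{Z'} − ε‖y'‖_{X'}) ≤ ‖y'‖_{Z'}^Θ ≤ (1/√(1−ε))(‖y'‖_{Z'} + ε‖y'‖_{X'}). -/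
/-!
Write `y' = R y` with `y ∈ Y`, so that `R⁻¹ y' = y`. Both seminorms are suprema over `w ∈ Z` of
ratios whose numerators `⟨y, w⟩_X` and `⟨Θ y, Θ w⟩` differ by at most `ε ‖y‖_X ‖w‖_X`, and whose
denominators satisfy `√(1 - ε) ‖w‖_X ≤ ‖Θ w‖ ≤ √(1 + ε) ‖w‖_X` by the embedding property applied
to `w` itself. Bounding each ratio of one supremum by the other supremum gives the two
inequalities, with `‖y'‖_{X'} = ‖y‖_X`.
-/

open Matrix BigOperators

noncomputable section

section RatioSupremum

variable {ι : Sort*} {u v m n : ι → ℝ} {B C S c e : ℝ}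

theorem iSup_abs_div_le (hm : ∀ i, 0 ≤ m i) (hB : 0 ≤ B) (h : ∀ i, |u i| ≤ B * m i) :
    ⨆ i, |u i| / m i ≤ B :=
  Real.iSup_le (fun i => div_le_of_le_mul₀ (hm i) hB (h i)) hB

/-- `C` only serves to bound the family: `⨆` of an unbounded family in `ℝ` is `0`. -/
theorem abs_le_iSup_abs_div_mul (hn : ∀ i, 0 ≤ n i) (hC : 0 ≤ C)
    (h : ∀ i, |v i| ≤ C * n i) (i : ι) : |v i| ≤ (⨆ j, |v j| / n j) * n i := by
  rcases (hn i).eq_or_lt with hi | hi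
  · simpa [← hi] using h i
  · have hbdd : BddAbove (Set.range fun j => |v j| / n j) :=
      ⟨C, Set.forall_mem_range.2 fun j => div_le_of_le_mul₀ (hn j) hC (h j)⟩
    exact (div_le_iff₀ hi).1 (le_ciSup hbdd i)

theorem iSup_abs_div_le_of_abs_sub_le (hm : ∀ i, 0 ≤ m i) (hS : 0 ≤ S) (hc : 0 ≤ c)
    (he : 0 ≤ e) (hv : ∀ i, |v i| ≤ S * n i) (hnm : ∀ i, n i ≤ c * m i)
    (huv : ∀ i, |u i - v i| ≤ e * m i) :
    ⨆ i, |u i| / m i ≤ c * S + e :=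
  iSup_abs_div_le hm (by positivity) fun i => calc
    |u i| ≤ |v i| + |u i - v i| := by simpa using abs_add_le (v i) (u i - v i)
    _ ≤ S * n i + e * m i := add_le_add (hv i) (huv i)
    _ ≤ S * (c * m i) + e * m i := by gcongr; exact hnm i
    _ = (c * S + e) * m i := by ring

end RatioSupremum

section InducedInnerProduct

variable {n k : ℕ} {R : Matrix (Fin n) (Fin n) ℝ}

theorem ipR_comm (hR : R.IsHermitian) (x y : Fin n → ℝ) : ipR R x y = ipR R y x := by
  rw [ipR, ipR, dotProduct_comm, dotProduct_mulVec, ← mulVec_transpose,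
    ← conjTranspose_eq_transpose_of_trivial, hR.eq]

theorem ipR_self_nonneg (hR : R.PosSemidef) (x : Fin n → ℝ) : 0 ≤ ipR R x x := by
  simpa [ipR, dotProduct_comm] using hR.dotProduct_mulVec_nonneg x

theorem normR_nonneg (x : Fin n → ℝ) : 0 ≤ normR R x := Real.sqrt_nonneg _

theorem abs_ipR_le (hR : R.PosSemidef) (x y : Fin n → ℝ) :
    |ipR R x y| ≤ normR R x * normR R y := by
  have hB (a b : Fin n → ℝ) : toBilin' R a b = ipR R b a := by
    rw [toBilin'_apply', ipR, dotProduct_comm]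
  have hcs : ipR R x y ^ 2 ≤ ipR R x x * ipR R y y := by
    have := (toBilin' R).apply_mul_apply_le_of_forall_zero_le
      (fun z => hB z z ▸ ipR_self_nonneg hR z) y x
    rwa [hB, hB, hB, hB, ipR_comm hR.isHermitian y x, ← sq, mul_comm] at this
  rw [normR, normR, ← Real.sqrt_mul (ipR_self_nonneg hR x)]
  exact Real.abs_le_sqrt hcs

theorem norm2_eq_normR_one {m : ℕ} (v : Fin m → ℝ) : norm2 v = normR 1 v := by
  simp [norm2, normR, ipR]

theorem abs_dotProduct_le {m : ℕ} (u v : Fin m → ℝ) : |u ⬝ᵥ v| ≤ norm2 u * norm2 v := by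
  simpa [norm2_eq_normR_one, ipR] using abs_ipR_le PosSemidef.one u v

theorem nonsing_inv_mulVec_mulVec (hR : IsUnit R.det) (x : Fin n → ℝ) : R⁻¹ *ᵥ (R *ᵥ x) = x := by
  rw [mulVec_mulVec, nonsing_inv_mul R hR, one_mulVec]

theorem normDual_mulVec (hR : IsUnit R.det) (x : Fin n → ℝ) :
    normDual R (R *ᵥ x) = normR R x := by
  rw [normDual, nonsing_inv_mulVec_mulVec hR, normR, ipR, dotProduct_comm]

theorem skDualSemi_mulVec (hR : IsUnit R.det) (Θ : Matrix (Fin k) (Fin n) ℝ)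
    (Z : Submodule ℝ (Fin n → ℝ)) (x : Fin n → ℝ) :
    skDualSemi R Θ Z (R *ᵥ x) = ⨆ w : Z, |(Θ *ᵥ x) ⬝ᵥ (Θ *ᵥ (w : Fin n → ℝ))| /
      norm2 (Θ *ᵥ (w : Fin n → ℝ)) := by
  rw [skDualSemi, nonsing_inv_mulVec_mulVec hR]

end InducedInnerProduct

section DualSeminorms

variable {n k : ℕ} {R : Matrix (Fin n) (Fin n) ℝ} {Θ : Matrix (Fin k) (Fin n) ℝ}
  {Z : Submodule ℝ (Fin n → ℝ)} {y' : Fin n → ℝ}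

theorem dualSemi_nonneg : 0 ≤ dualSemi R Z y' :=
  Real.iSup_nonneg fun _ => div_nonneg (abs_nonneg _) (normR_nonneg _)

theorem skDualSemi_nonneg : 0 ≤ skDualSemi R Θ Z y' :=
  Real.iSup_nonneg fun _ => div_nonneg (abs_nonneg _) (Real.sqrt_nonneg _)

theorem abs_ipR_le_dualSemi_mul (hR : R.PosSemidef) (y : Fin n → ℝ) (w : Z) :
    |ipR R y w| ≤ dualSemi R Z (R *ᵥ y) * normR R w :=
  abs_le_iSup_abs_div_mul (n := fun w : Z => normR R w) (fun _ => normR_nonneg _)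
    (normR_nonneg y) (fun w => abs_ipR_le hR y w) w

theorem abs_dotProduct_le_skDualSemi_mul (hR : IsUnit R.det) (y : Fin n → ℝ) (w : Z) :
    |(Θ *ᵥ y) ⬝ᵥ (Θ *ᵥ (w : Fin n → ℝ))| ≤
      skDualSemi R Θ Z (R *ᵥ y) * norm2 (Θ *ᵥ (w : Fin n → ℝ)) := by
  rw [skDualSemi_mulVec hR]
  exact abs_le_iSup_abs_div_mul (n := fun w : Z => norm2 (Θ *ᵥ (w : Fin n → ℝ)))
    (fun _ => Real.sqrt_nonneg _) (Real.sqrt_nonneg _) (fun w => abs_dotProduct_le _ _) w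

end DualSeminorms

section SubspaceEmbedding

def IsSubspaceEmbedding {n k : ℕ} (R : Matrix (Fin n) (Fin n) ℝ) (Θ : Matrix (Fin k) (Fin n) ℝ)
    (Y : Submodule ℝ (Fin n → ℝ)) (ε : ℝ) : Prop :=
  ∀ x ∈ Y, ∀ y ∈ Y, |ipR R x y - (Θ *ᵥ x) ⬝ᵥ (Θ *ᵥ y)| ≤ ε * normR R x * normR R y

variable {n k : ℕ} {R : Matrix (Fin n) (Fin n) ℝ} {Θ : Matrix (Fin k) (Fin n) ℝ}
  {Y Z : Submodule ℝ (Fin n → ℝ)} {ε : ℝ} {x y : Fin n → ℝ}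

theorem IsSubspaceEmbedding.abs_sq_sub_le (hΘ : IsSubspaceEmbedding R Θ Y ε) (hR : R.PosSemidef)
    (hx : x ∈ Y) : |ipR R x x - (Θ *ᵥ x) ⬝ᵥ (Θ *ᵥ x)| ≤ ε * ipR R x x := by
  simpa [mul_assoc, normR, Real.mul_self_sqrt (ipR_self_nonneg hR x)] using hΘ x hx x hx

theorem IsSubspaceEmbedding.norm2_mulVec_le (hΘ : IsSubspaceEmbedding R Θ Y ε)
    (hR : R.PosSemidef) (hx : x ∈ Y) : norm2 (Θ *ᵥ x) ≤ √(1 + ε) * normR R x :=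
  calc norm2 (Θ *ᵥ x) ≤ √((1 + ε) * ipR R x x) :=
        Real.sqrt_le_sqrt (by linarith [(abs_le.1 (hΘ.abs_sq_sub_le hR hx)).1])
    _ = √(1 + ε) * normR R x := Real.sqrt_mul' _ (ipR_self_nonneg hR x)

theorem IsSubspaceEmbedding.normR_le (hΘ : IsSubspaceEmbedding R Θ Y ε) (hR : R.PosSemidef)
    (hε : ε < 1) (hx : x ∈ Y) : normR R x ≤ 1 / √(1 - ε) * norm2 (Θ *ᵥ x) := by
  rw [one_div, le_inv_mul_iff₀ (Real.sqrt_pos.2 (by linarith))]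
  calc √(1 - ε) * normR R x = √((1 - ε) * ipR R x x) :=
        (Real.sqrt_mul' _ (ipR_self_nonneg hR x)).symm
    _ ≤ norm2 (Θ *ᵥ x) :=
        Real.sqrt_le_sqrt (by linarith [(abs_le.1 (hΘ.abs_sq_sub_le hR hx)).2])

theorem IsSubspaceEmbedding.dualSemi_le (hΘ : IsSubspaceEmbedding R Θ Y ε) (hR : R.PosDef)
    (hε : 0 ≤ ε) (hZ : Z ≤ Y) (hy : y ∈ Y) :
    dualSemi R Z (R *ᵥ y) ≤ √(1 + ε) * skDualSemi R Θ Z (R *ᵥ y) + ε * normR R y :=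
  iSup_abs_div_le_of_abs_sub_le (fun _ => normR_nonneg _) skDualSemi_nonneg (Real.sqrt_nonneg _)
    (mul_nonneg hε (normR_nonneg y)) (abs_dotProduct_le_skDualSemi_mul hR.det_pos.ne'.isUnit y)
    (fun w => hΘ.norm2_mulVec_le hR.posSemidef (hZ w.2)) (fun w => hΘ y hy w (hZ w.2))

theorem IsSubspaceEmbedding.skDualSemi_le (hΘ : IsSubspaceEmbedding R Θ Y ε) (hR : R.PosDef)
    (hε0 : 0 ≤ ε) (hε1 : ε < 1) (hZ : Z ≤ Y) (hy : y ∈ Y) :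
    skDualSemi R Θ Z (R *ᵥ y) ≤ 1 / √(1 - ε) * (dualSemi R Z (R *ᵥ y) + ε * normR R y) := by
  set c := 1 / √(1 - ε)
  have hc : 0 ≤ c := by positivity
  have hεy : 0 ≤ ε * normR R y := mul_nonneg hε0 (normR_nonneg y)
  have hnorm (w : Z) : normR R w ≤ c * norm2 (Θ *ᵥ (w : Fin n → ℝ)) :=
    hΘ.normR_le hR.posSemidef hε1 (hZ w.2)
  have hdiff (w : Z) : |(Θ *ᵥ y) ⬝ᵥ (Θ *ᵥ (w : Fin n → ℝ)) - ipR R y w| ≤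
      c * (ε * normR R y) * norm2 (Θ *ᵥ (w : Fin n → ℝ)) :=
    calc _ ≤ ε * normR R y * normR R w := by rw [abs_sub_comm]; exact hΘ y hy w (hZ w.2)
      _ ≤ ε * normR R y * (c * norm2 (Θ *ᵥ (w : Fin n → ℝ))) := by gcongr; exact hnorm w
      _ = _ := by ring
  rw [skDualSemi_mulVec hR.det_pos.ne'.isUnit, mul_add]
  exact iSup_abs_div_le_of_abs_sub_le (fun _ => Real.sqrt_nonneg _) dualSemi_nonneg hc
    (mul_nonneg hc hεy) (abs_ipR_le_dualSemi_mul hR.posSemidef y) hnorm hdiff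

end SubspaceEmbedding

/-- Two-sided bound relating the sketched dual seminorm `‖·‖_{Z'}^Θ` to the exact
dual seminorm `‖·‖_{Z'}` for vectors of `Y' = R Y`. -/
theorem sketched_seminorm_bounds {n k : ℕ} (R : Matrix (Fin n) (Fin n) ℝ) (hR : R.PosDef)
    (Θ : Matrix (Fin k) (Fin n) ℝ) (Y Z : Submodule ℝ (Fin n → ℝ)) (hZ : Z ≤ Y)
    (ε : ℝ) (hε0 : 0 ≤ ε) (hε1 : ε < 1)
    (hemb : ∀ x ∈ Y, ∀ y ∈ Y,
      |ipR R x y - (Θ.mulVec x) ⬝ᵥ (Θ.mulVec y)| ≤ ε * normR R x * normR R y) :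
    ∀ y' ∈ Submodule.map R.mulVecLin Y,
      (1 / Real.sqrt (1 + ε)) * (dualSemi R Z y' - ε * normDual R y') ≤
        skDualSemi R Θ Z y' ∧
      skDualSemi R Θ Z y' ≤
        (1 / Real.sqrt (1 - ε)) * (dualSemi R Z y' + ε * normDual R y') := by
  rintro _ ⟨y, hy, rfl⟩
  have hΘ : IsSubspaceEmbedding R Θ Y ε := hemb
  rw [mulVecLin_apply, normDual_mulVec hR.det_pos.ne'.isUnit]
  refine ⟨?_, hΘ.skDualSemi_le hR hε0 hε1 hZ hy⟩
  rw [one_div, inv_mul_le_iff₀ (Real.sqrt_pos.2 (by linarith))]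
  linarith [hΘ.dualSemi_le hR hε0 hZ hy]
end
end

section
/- Let Θ be a U → ℓ2 ε-subspace embedding for U_r = range(U_r matrix), and let the columns of U_r be orthonormal with respect to ⟨x,y⟩_U^Θ = ⟨Θx, Θy⟩. Then the condition number of A_r(μ) = U_r^H Θ^H Θ R_U^{-1} A(μ) U_r is bounded by √((1+ε)/(1−ε)) · β_r^Θ(μ)/α_r^Θ(μ). -/
/-!
If the columns of `Θ U` are orthonormal, then `A_r a = (Θ U)ᵀ Θ R⁻¹ A (U a)` is the coordinate
vector of `Θ R⁻¹ A (U a)` in that basis, so its Euclidean norm is exactly the sketched dual norm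
`‖A (U a)‖^Θ_{U_r'}`, which the definitions of `α^Θ`, `β^Θ` squeeze between `α ‖U a‖_U` and
`β ‖U a‖_U`. The ε-embedding turns `‖U a‖_U` into `‖Θ U a‖ = ‖a‖` up to the factors
`√(1 ± ε)`.
-/

open Matrix BigOperators

noncomputable section

lemma dotProduct_self_nonneg {m : ℕ} (v : Fin m → ℝ) : 0 ≤ v ⬝ᵥ v := dotProduct_star_self_nonneg v

lemma abs_dotProduct_le_norm2_mul_norm2 {m : ℕ} (v w : Fin m → ℝ) :
    |v ⬝ᵥ w| ≤ norm2 v * norm2 w := by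
  have hsq : (v ⬝ᵥ w) ^ 2 ≤ (v ⬝ᵥ v) * (w ⬝ᵥ w) := by
    simpa [dotProduct, sq] using Finset.sum_mul_sq_le_sq_mul_sq Finset.univ v w
  calc |v ⬝ᵥ w| = √((v ⬝ᵥ w) ^ 2) := (Real.sqrt_sq_eq_abs _).symm
    _ ≤ √((v ⬝ᵥ v) * (w ⬝ᵥ w)) := Real.sqrt_le_sqrt hsq
    _ = norm2 v * norm2 w := Real.sqrt_mul (dotProduct_self_nonneg v) _

-- The term at `w = 0` is `0 / 0 = 0`, which does not affect the supremum.
lemma iSup_abs_dotProduct_div_norm2 {m : ℕ} (v : Fin m → ℝ) :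
    ⨆ w : Fin m → ℝ, |v ⬝ᵥ w| / norm2 w = norm2 v := by
  have hle : ∀ w, |v ⬝ᵥ w| / norm2 w ≤ norm2 v := fun w =>
    div_le_of_le_mul₀ (norm2_nonneg w) (norm2_nonneg v) (abs_dotProduct_le_norm2_mul_norm2 v w)
  have hattained : |v ⬝ᵥ v| / norm2 v = norm2 v := by
    rw [abs_of_nonneg (dotProduct_self_nonneg v)]
    exact Real.div_sqrt
  refine le_antisymm (ciSup_le hle) ?_
  rw [← hattained]
  exact le_ciSup ⟨norm2 v, Set.forall_mem_range.2 hle⟩ v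

lemma mulVec_colV {l n m : ℕ} (M : Matrix (Fin l) (Fin n) ℝ) (N : Matrix (Fin n) (Fin m) ℝ)
    (i : Fin m) : M *ᵥ colV N i = colV (M * N) i := by
  ext j
  simp [colV, mulVec, dotProduct, Matrix.mul_apply]

lemma transpose_mul_self_eq_one_of_orthonormal {n m : ℕ} (V : Matrix (Fin n) (Fin m) ℝ)
    (hV : ∀ i j, colV V i ⬝ᵥ colV V j = if i = j then 1 else 0) : Vᵀ * V = 1 := by
  ext i j
  simpa [Matrix.mul_apply, dotProduct, colV, Matrix.one_apply] using hV i j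

lemma norm2_mulVec_of_transpose_mul_self_eq_one {n m : ℕ} {V : Matrix (Fin n) (Fin m) ℝ}
    (hV : Vᵀ * V = 1) (w : Fin m → ℝ) : norm2 (V *ᵥ w) = norm2 w := by
  rw [norm2, norm2, dotProduct_mulVec, vecMul_mulVec, hV, vecMul_one]

lemma skDualSemi_range_eq_norm2 {n k r : ℕ} (R : Matrix (Fin n) (Fin n) ℝ)
    (Θ : Matrix (Fin k) (Fin n) ℝ) {U : Matrix (Fin n) (Fin r) ℝ}
    (hU : (Θ * U)ᵀ * (Θ * U) = 1) (y : Fin n → ℝ) :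
    skDualSemi R Θ (LinearMap.range U.mulVecLin) y = norm2 ((Θ * U)ᵀ *ᵥ (Θ *ᵥ (R⁻¹ *ᵥ y))) := by
  rw [skDualSemi, ← (LinearMap.surjective_rangeRestrict U.mulVecLin).iSup_comp,
    ← iSup_abs_dotProduct_div_norm2]
  congr 1
  ext w
  simp only [LinearMap.codRestrict_apply, Matrix.mulVecLin_apply]
  rw [mulVec_transpose, ← dotProduct_mulVec, ← norm2_mulVec_of_transpose_mul_self_eq_one hU w,
    ← mulVec_mulVec]

lemma normR_mul_self {n : ℕ} {R : Matrix (Fin n) (Fin n) ℝ} (hR : R.PosSemidef) (x : Fin n → ℝ) :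
    normR R x * normR R x = ipR R x x := by
  refine Real.mul_self_sqrt ?_
  rw [ipR, dotProduct_comm]
  exact hR.dotProduct_mulVec_nonneg x

section Embedding

variable {n : ℕ} {R : Matrix (Fin n) (Fin n) ℝ} {x : Fin n → ℝ} {m : ℕ} {z : Fin m → ℝ} {ε : ℝ}

lemma norm2_le_sqrt_one_add_mul_normR (hR : R.PosSemidef)
    (h : |ipR R x x - z ⬝ᵥ z| ≤ ε * normR R x * normR R x) :
    norm2 z ≤ √(1 + ε) * normR R x := by
  have hsq : z ⬝ᵥ z ≤ (1 + ε) * ipR R x x := by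
    rw [mul_assoc, normR_mul_self hR] at h
    linarith [(abs_le.1 h).1]
  calc norm2 z ≤ √((1 + ε) * ipR R x x) := Real.sqrt_le_sqrt hsq
    _ = √(1 + ε) * normR R x := Real.sqrt_mul' _ (normR_mul_self hR x ▸ mul_self_nonneg _)

lemma sqrt_one_sub_mul_normR_le_norm2 (hR : R.PosSemidef)
    (h : |ipR R x x - z ⬝ᵥ z| ≤ ε * normR R x * normR R x) :
    √(1 - ε) * normR R x ≤ norm2 z := by
  have hsq : (1 - ε) * ipR R x x ≤ z ⬝ᵥ z := by
    rw [mul_assoc, normR_mul_self hR] at h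
    linarith [(abs_le.1 h).2]
  calc √(1 - ε) * normR R x = √((1 - ε) * ipR R x x) :=
        (Real.sqrt_mul' _ (normR_mul_self hR x ▸ mul_self_nonneg _)).symm
    _ ≤ norm2 z := Real.sqrt_le_sqrt hsq

end Embedding

lemma bounds_of_sqrt_norm_equiv {p q N α β ε : ℝ} (hq : 0 ≤ q) (hN : 0 ≤ N) (hε : ε < 1)
    (hp_le : p ≤ √(1 + ε) * q) (hle_p : √(1 - ε) * q ≤ p) (hα : α * q ≤ N) (hβ : N ≤ β * q) :
    1 / √(1 + ε) * α * p ≤ N ∧ N ≤ 1 / √(1 - ε) * β * p := by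
  have hc : 0 < √(1 - ε) := Real.sqrt_pos.2 (sub_pos.2 hε)
  have hp : 0 ≤ p := (mul_nonneg hc.le hq).trans hle_p
  constructor
  · rcases le_or_gt α 0 with hα0 | hα0
    · exact (mul_nonpos_of_nonpos_of_nonneg
        (mul_nonpos_of_nonneg_of_nonpos (by positivity) hα0) hp).trans hN
    calc 1 / √(1 + ε) * α * p = α * (p / √(1 + ε)) := by ring
      _ ≤ α * q := by
        gcongr
        exact div_le_of_le_mul₀ (Real.sqrt_nonneg _) hq (hp_le.trans_eq (mul_comm _ _))
      _ ≤ N := hα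
  · rcases hq.eq_or_lt with rfl | hq
    · have hp0 : p = 0 := le_antisymm (by simpa using hp_le) hp
      simpa [hp0] using hβ
    have hβ0 : 0 ≤ β := nonneg_of_mul_nonneg_left (hN.trans hβ) hq
    calc N ≤ β * q := hβ
      _ ≤ β * (p / √(1 - ε)) := by
        gcongr
        rw [le_div_iff₀ hc]
        exact (mul_comm _ _).trans_le hle_p
      _ = 1 / √(1 - ε) * β * p := by ring

theorem sketched_reduced_matrix_conditioning_general {n k r : ℕ}
    (R A : Matrix (Fin n) (Fin n) ℝ) (hR : R.PosDef)
    (Θ : Matrix (Fin k) (Fin n) ℝ) (u : Fin n → ℝ)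
    (U : Matrix (Fin n) (Fin r) ℝ)
    (hortho : ∀ i j : Fin r,
      (Θ.mulVec (colV U i)) ⬝ᵥ (Θ.mulVec (colV U j)) = if i = j then 1 else 0)
    (ε α β : ℝ) (hε1 : ε < 1)
    (hemb : ∀ x ∈ LinearMap.range U.mulVecLin, ∀ y ∈ LinearMap.range U.mulVecLin,
      |ipR R x y - (Θ.mulVec x) ⬝ᵥ (Θ.mulVec y)| ≤ ε * normR R x * normR R y)
    (hα : ∀ x ∈ LinearMap.range U.mulVecLin,
      α * normR R x ≤ skDualSemi R Θ (LinearMap.range U.mulVecLin) (A.mulVec x))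
    (hβ : ∀ x ∈ Submodule.span ℝ {u} ⊔ LinearMap.range U.mulVecLin,
      skDualSemi R Θ (LinearMap.range U.mulVecLin) (A.mulVec x) ≤ β * normR R x) :
    ∀ a : Fin r → ℝ,
      (1 / Real.sqrt (1 + ε)) * α * norm2 a ≤
        norm2 ((Uᵀ * Θᵀ * Θ * R⁻¹ * A * U).mulVec a) ∧
      norm2 ((Uᵀ * Θᵀ * Θ * R⁻¹ * A * U).mulVec a) ≤
        (1 / Real.sqrt (1 - ε)) * β * norm2 a := by
  intro a
  have hU : (Θ * U)ᵀ * (Θ * U) = 1 :=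
    transpose_mul_self_eq_one_of_orthonormal _ fun i j => by
      simpa only [mulVec_colV] using hortho i j
  have hx : U *ᵥ a ∈ LinearMap.range U.mulVecLin := ⟨a, rfl⟩
  have hsketch : norm2 (Θ *ᵥ (U *ᵥ a)) = norm2 a := by
    rw [mulVec_mulVec, norm2_mulVec_of_transpose_mul_self_eq_one hU]
  have hreduced : skDualSemi R Θ (LinearMap.range U.mulVecLin) (A *ᵥ (U *ᵥ a)) =
      norm2 ((Uᵀ * Θᵀ * Θ * R⁻¹ * A * U) *ᵥ a) := by
    rw [skDualSemi_range_eq_norm2 R Θ hU]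
    simp only [transpose_mul, mulVec_mulVec, Matrix.mul_assoc]
  have hemb_x := hemb _ hx _ hx
  have hupper := norm2_le_sqrt_one_add_mul_normR hR.posSemidef hemb_x
  have hlower := sqrt_one_sub_mul_normR_le_norm2 hR.posSemidef hemb_x
  have hα_x := hα _ hx
  have hβ_x := hβ _ (Submodule.mem_sup_right hx)
  rw [hsketch] at hupper hlower
  rw [hreduced] at hα_x hβ_x
  exact bounds_of_sqrt_norm_equiv (Real.sqrt_nonneg _) (norm2_nonneg _) hε1 hupper hlower hα_x hβ_x

/-- Conditioning of the sketched reduced matrix `A_r = Uᵀ Θᵀ Θ R⁻¹ A U` when the columns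
of `U` are orthonormal with respect to `⟨Θ·,Θ·⟩`: all its singular values lie in
`[α^Θ/√(1+ε), β^Θ/√(1-ε)]`, so its condition number is bounded by
`√((1+ε)/(1-ε))·β^Θ/α^Θ`. -/
theorem sketched_reduced_matrix_conditioning {n k r : ℕ}
    (R A : Matrix (Fin n) (Fin n) ℝ) (hR : R.PosDef)
    (Θ : Matrix (Fin k) (Fin n) ℝ) (b u : Fin n → ℝ) (hu : A.mulVec u = b)
    (U : Matrix (Fin n) (Fin r) ℝ)
    (hortho : ∀ i j : Fin r,
      (Θ.mulVec (colV U i)) ⬝ᵥ (Θ.mulVec (colV U j)) = if i = j then 1 else 0)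
    (ε α β : ℝ) (hε0 : 0 ≤ ε) (hε1 : ε < 1)
    (hemb : ∀ x ∈ LinearMap.range U.mulVecLin, ∀ y ∈ LinearMap.range U.mulVecLin,
      |ipR R x y - (Θ.mulVec x) ⬝ᵥ (Θ.mulVec y)| ≤ ε * normR R x * normR R y)
    (hα : ∀ x ∈ LinearMap.range U.mulVecLin,
      α * normR R x ≤ skDualSemi R Θ (LinearMap.range U.mulVecLin) (A.mulVec x))
    (hβ : ∀ x ∈ Submodule.span ℝ {u} ⊔ LinearMap.range U.mulVecLin,
      skDualSemi R Θ (LinearMap.range U.mulVecLin) (A.mulVec x) ≤ β * normR R x) :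
    ∀ a : Fin r → ℝ,
      (1 / Real.sqrt (1 + ε)) * α * norm2 a ≤
        norm2 ((Uᵀ * Θᵀ * Θ * R⁻¹ * A * U).mulVec a) ∧
      norm2 ((Uᵀ * Θᵀ * Θ * R⁻¹ * A * U).mulVec a) ≤
        (1 / Real.sqrt (1 - ε)) * β * norm2 a :=
  sketched_reduced_matrix_conditioning_general R A hR Θ u U hortho ε α β hε1 hemb hα hβ
end
end

section
/- Let V ⊆ K^n be a subspace and Θ ∈ K^{k×n}. If |‖Θ x‖² − ‖x‖²| ≤ ε‖x‖² holds for every x ∈ V (with 0 ≤ ε < 1 and K = ℝ), then |⟨x,y⟩ − ⟨Θx, Θy⟩| ≤ ε‖x‖‖y‖ for all x, y ∈ V. -/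
open Matrix BigOperators

noncomputable section

/-- Norm preservation on a subspace implies inner-product preservation
(polarization argument). -/
theorem norm_to_inner_embedding {n k : ℕ} (Θ : Matrix (Fin k) (Fin n) ℝ)
    (V : Submodule ℝ (Fin n → ℝ)) (ε : ℝ) (hε0 : 0 ≤ ε) (hε1 : ε < 1)
    (h : ∀ x ∈ V, |(Θ.mulVec x) ⬝ᵥ (Θ.mulVec x) - x ⬝ᵥ x| ≤ ε * (x ⬝ᵥ x)) :
    ∀ x ∈ V, ∀ y ∈ V,
      |x ⬝ᵥ y - (Θ.mulVec x) ⬝ᵥ (Θ.mulVec y)| ≤ ε * norm2 x * norm2 y := by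
  intro x hx y hy
  by_cases hx0 : x = 0
  · simp [hx0, norm2]
  by_cases hy0 : y = 0
  · simp [hy0, norm2]
  have hnn : ∀ w : Fin n → ℝ, 0 ≤ w ⬝ᵥ w := fun w =>
    Finset.sum_nonneg fun i _ => mul_self_nonneg (w i)
  have hxx : 0 < x ⬝ᵥ x := by
    rcases lt_or_eq_of_le (hnn x) with h' | h'
    · exact h'
    · exact absurd ((dotProduct_self_eq_zero (v := x)).mp h'.symm) hx0
  have hyy : 0 < y ⬝ᵥ y := by
    rcases lt_or_eq_of_le (hnn y) with h' | h'
    · exact h'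
    · exact absurd ((dotProduct_self_eq_zero (v := y)).mp h'.symm) hy0
  set s : ℝ := norm2 x with hs
  set t : ℝ := norm2 y with ht
  have hspos : 0 < s := Real.sqrt_pos.mpr hxx
  have htpos : 0 < t := Real.sqrt_pos.mpr hyy
  have hs2 : s * s = x ⬝ᵥ x := Real.mul_self_sqrt hxx.le
  have ht2 : t * t = y ⬝ᵥ y := Real.mul_self_sqrt hyy.le
  set u : Fin n → ℝ := s⁻¹ • x with hu
  set v : Fin n → ℝ := t⁻¹ • y with hv
  have huV : u ∈ V := V.smul_mem _ hx
  have hvV : v ∈ V := V.smul_mem _ hy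
  have huu : u ⬝ᵥ u = 1 := by
    simp [hu, smul_dotProduct, dotProduct_smul, smul_eq_mul]
    field_simp
    nlinarith [hs2]
  have hvv : v ⬝ᵥ v = 1 := by
    simp [hv, smul_dotProduct, dotProduct_smul, smul_eq_mul]
    field_simp
    nlinarith [ht2]
  have h1 := h (u + v) (V.add_mem huV hvV)
  have h2 := h (u - v) (V.sub_mem huV hvV)
  have e1 : (u + v) ⬝ᵥ (u + v) = u ⬝ᵥ u + 2 * (u ⬝ᵥ v) + v ⬝ᵥ v := by
    simp [add_dotProduct, dotProduct_add, dotProduct_comm v u]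
    ring
  have e2 : (u - v) ⬝ᵥ (u - v) = u ⬝ᵥ u - 2 * (u ⬝ᵥ v) + v ⬝ᵥ v := by
    simp [sub_dotProduct, dotProduct_sub, dotProduct_comm v u]
    ring
  have e3 : Θ.mulVec (u + v) ⬝ᵥ Θ.mulVec (u + v)
      = Θ.mulVec u ⬝ᵥ Θ.mulVec u + 2 * (Θ.mulVec u ⬝ᵥ Θ.mulVec v)
        + Θ.mulVec v ⬝ᵥ Θ.mulVec v := by
    simp [Matrix.mulVec_add, add_dotProduct, dotProduct_add,
      dotProduct_comm (Θ.mulVec v) (Θ.mulVec u)]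
    ring
  have e4 : Θ.mulVec (u - v) ⬝ᵥ Θ.mulVec (u - v)
      = Θ.mulVec u ⬝ᵥ Θ.mulVec u - 2 * (Θ.mulVec u ⬝ᵥ Θ.mulVec v)
        + Θ.mulVec v ⬝ᵥ Θ.mulVec v := by
    simp [Matrix.mulVec_sub, sub_dotProduct, dotProduct_sub,
      dotProduct_comm (Θ.mulVec v) (Θ.mulVec u)]
    ring
  rw [e1, e3] at h1
  rw [e2, e4] at h2
  rw [huu, hvv] at h1 h2
  have key : |u ⬝ᵥ v - Θ.mulVec u ⬝ᵥ Θ.mulVec v| ≤ ε := by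
    rw [abs_le] at h1 h2 ⊢
    constructor <;> linarith [h1.1, h1.2, h2.1, h2.2]
  have euv : u ⬝ᵥ v = (s⁻¹ * t⁻¹) * (x ⬝ᵥ y) := by
    simp [hu, hv, smul_dotProduct, dotProduct_smul, smul_eq_mul]; ring
  have eTuv : Θ.mulVec u ⬝ᵥ Θ.mulVec v = (s⁻¹ * t⁻¹) * (Θ.mulVec x ⬝ᵥ Θ.mulVec y) := by
    simp [hu, hv, Matrix.mulVec_smul, smul_dotProduct, dotProduct_smul,
      smul_eq_mul]; ring
  rw [euv, eTuv, ← mul_sub, abs_mul, abs_of_pos (by positivity : (0:ℝ) < s⁻¹ * t⁻¹)] at key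
  calc |x ⬝ᵥ y - Θ.mulVec x ⬝ᵥ Θ.mulVec y|
      = (s * t) * ((s⁻¹ * t⁻¹) * |x ⬝ᵥ y - Θ.mulVec x ⬝ᵥ Θ.mulVec y|) := by
        field_simp
    _ ≤ (s * t) * ε := by
        apply mul_le_mul_of_nonneg_left key (by positivity)
    _ = ε * s * t := by ring
end
end

section
/- Let N be a γ-net (0 < γ < 1) of the unit sphere S of a subspace V ⊆ ℝ^n, and suppose Θ satisfies |⟨x,y⟩ − ⟨Θx,Θy⟩| ≤ η for all x, y ∈ N. Then every unit vector n ∈ S satisfies |1 − ‖Θn‖²| ≤ η/(1−γ)². -/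
/-!
Write `B x z = ⟨x, z⟩ - ⟨Θ x, Θ z⟩`. For a net point `y` and a unit vector `z ∈ V`, pick a net
point `y'` with `‖z - y'‖ ≤ γ`: then `B y z = B y y' + B y (z - y')`, so the supremum `M₁` of
`|B y z|` satisfies `M₁ ≤ η + γ M₁`, i.e. `M₁ ≤ η / (1 - γ)`. Approximating the first argument
in the same way, the supremum `M` of `|B x z|` over unit `x, z ∈ V` satisfies `M ≤ M₁ + γ M`,
hence `M ≤ η / (1 - γ)²`. Both suprema are finite because `B` is bounded.
-/

open Matrix BigOperators

noncomputable section

theorem le_div_one_sub_of_forall_le_add_mul {α : Type*} {f : α → ℝ} {s : Set α} {γ η : ℝ}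
    (hγ : γ < 1) (hbdd : BddAbove (f '' s))
    (hstep : ∀ K, (∀ a ∈ s, f a ≤ K) → ∀ a ∈ s, f a ≤ η + γ * K) :
    ∀ a ∈ s, f a ≤ η / (1 - γ) := by
  intro a ha
  have hS : ∀ b ∈ s, f b ≤ sSup (f '' s) := fun b hb => le_csSup hbdd (Set.mem_image_of_mem f hb)
  have hfix : sSup (f '' s) ≤ η + γ * sSup (f '' s) :=
    csSup_le ((Set.nonempty_of_mem ha).image f) (by
      rintro _ ⟨b, hb, rfl⟩
      exact hstep _ hS b hb)
  rw [le_div_iff₀ (by linarith)]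
  nlinarith [hS a ha]

section NetBound

variable {E : Type*} [NormedAddCommGroup E] [NormedSpace ℝ E] {V : Submodule ℝ E}

theorem abs_apply_le_mul_norm_of_unit {f : E →L[ℝ] ℝ} {K : ℝ}
    (hf : ∀ u ∈ V, ‖u‖ = 1 → |f u| ≤ K) {w : E} (hw : w ∈ V) : |f w| ≤ K * ‖w‖ := by
  rcases eq_or_ne w 0 with rfl | hw0
  · simp
  have hpos : 0 < ‖w‖ := norm_pos_iff.mpr hw0
  have hunit := hf (‖w‖⁻¹ • w) (V.smul_mem _ hw) (by
    rw [norm_smul, norm_inv, norm_norm, inv_mul_cancel₀ hpos.ne'])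
  rw [map_smul, smul_eq_mul, abs_mul, abs_inv, abs_norm, inv_mul_le_iff₀ hpos] at hunit
  linarith

variable (B : E →L[ℝ] E →L[ℝ] ℝ) {N : Set E} {γ η : ℝ}

theorem abs_apply_apply_le_opNorm {x z : E} (hx : ‖x‖ = 1) (hz : ‖z‖ = 1) : |B x z| ≤ ‖B‖ := by
  simpa [hx, hz] using B.le_opNorm₂ x z

variable (hγ : γ < 1) (hN : ∀ y ∈ N, y ∈ V ∧ ‖y‖ = 1)
  (hnet : ∀ x ∈ V, ‖x‖ = 1 → ∃ y ∈ N, ‖x - y‖ ≤ γ)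
  (hB : ∀ y ∈ N, ∀ y' ∈ N, |B y y'| ≤ η)
include hγ hN hnet hB

theorem abs_apply_net_le : ∀ y ∈ N, ∀ z ∈ V, ‖z‖ = 1 → |B y z| ≤ η / (1 - γ) := by
  intro y hy z hz hz1
  refine le_div_one_sub_of_forall_le_add_mul (f := fun p : E × E => |B p.1 p.2|)
    (s := {p | p.1 ∈ N ∧ p.2 ∈ V ∧ ‖p.2‖ = 1}) hγ ?_ ?_ (y, z) ⟨hy, hz, hz1⟩
  · refine ⟨‖B‖, ?_⟩
    rintro _ ⟨⟨y, z⟩, ⟨hy, -, hz1⟩, rfl⟩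
    exact abs_apply_apply_le_opNorm B (hN y hy).2 hz1
  rintro K hK ⟨y, z⟩ ⟨hy, hz, hz1⟩
  obtain ⟨y', hy', hzy'⟩ := hnet z hz hz1
  have hK0 : 0 ≤ K := (abs_nonneg _).trans (hK (y, z) ⟨hy, hz, hz1⟩)
  have hrest : |B y (z - y')| ≤ K * γ :=
    (abs_apply_le_mul_norm_of_unit (fun u hu hu1 => hK (y, u) ⟨hy, hu, hu1⟩)
      (V.sub_mem hz (hN y' hy').1)).trans (mul_le_mul_of_nonneg_left hzy' hK0)
  calc |B y z| = |B y y' + B y (z - y')| := by rw [map_sub, add_sub_cancel]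
    _ ≤ |B y y'| + |B y (z - y')| := abs_add_le _ _
    _ ≤ η + γ * K := by linarith [hB y hy y' hy']

theorem abs_apply_unit_le :
    ∀ x ∈ V, ‖x‖ = 1 → ∀ z ∈ V, ‖z‖ = 1 → |B x z| ≤ η / (1 - γ) ^ 2 := by
  intro x hx hx1 z hz hz1
  rw [sq, ← div_div]
  refine le_div_one_sub_of_forall_le_add_mul (f := fun p : E × E => |B p.1 p.2|)
    (s := {p | p.1 ∈ V ∧ ‖p.1‖ = 1 ∧ p.2 ∈ V ∧ ‖p.2‖ = 1}) hγ ?_ ?_ (x, z) ⟨hx, hx1, hz, hz1⟩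
  · refine ⟨‖B‖, ?_⟩
    rintro _ ⟨⟨x, z⟩, ⟨-, hx1, -, hz1⟩, rfl⟩
    exact abs_apply_apply_le_opNorm B hx1 hz1
  rintro K hK ⟨x, z⟩ ⟨hx, hx1, hz, hz1⟩
  obtain ⟨y, hy, hxy⟩ := hnet x hx hx1
  have hK0 : 0 ≤ K := (abs_nonneg _).trans (hK (x, z) ⟨hx, hx1, hz, hz1⟩)
  have hrest : |B.flip z (x - y)| ≤ K * γ :=
    (abs_apply_le_mul_norm_of_unit (fun u hu hu1 => hK (u, z) ⟨hu, hu1, hz, hz1⟩)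
      (V.sub_mem hx (hN y hy).1)).trans (mul_le_mul_of_nonneg_left hxy hK0)
  rw [B.flip_apply] at hrest
  calc |B x z| = |B y z + B (x - y) z| := by rw [map_sub, _root_.sub_apply, add_sub_cancel]
    _ ≤ |B y z| + |B (x - y) z| := abs_add_le _ _
    _ ≤ η / (1 - γ) + γ * K := by linarith [abs_apply_net_le B hγ hN hnet hB y hy z hz hz1]

end NetBound

section Matrix

variable {k m n : ℕ}

theorem norm_eq_norm2_ofLp (x : EuclideanSpace ℝ (Fin m)) : ‖x‖ = norm2 x.ofLp := by
  rw [EuclideanSpace.norm_eq, norm2]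
  simp [dotProduct, sq]

theorem inner_eq_dotProduct_ofLp (x z : EuclideanSpace ℝ (Fin m)) :
    inner ℝ x z = x.ofLp ⬝ᵥ z.ofLp := by
  simp [EuclideanSpace.inner_eq_star_dotProduct, dotProduct_comm]

def dotProductDefect (Θ : Matrix (Fin k) (Fin n) ℝ) :
    EuclideanSpace ℝ (Fin n) →L[ℝ] EuclideanSpace ℝ (Fin n) →L[ℝ] ℝ :=
  let T := LinearMap.toContinuousLinearMap (Matrix.toLpLin 2 2 Θ)
  innerSL ℝ - (innerSL ℝ).bilinearComp T T

theorem dotProductDefect_apply (Θ : Matrix (Fin k) (Fin n) ℝ) (x z : EuclideanSpace ℝ (Fin n)) :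
    dotProductDefect Θ x z = x.ofLp ⬝ᵥ z.ofLp - Θ *ᵥ x.ofLp ⬝ᵥ Θ *ᵥ z.ofLp := by
  simp [dotProductDefect, inner_eq_dotProduct_ofLp]
  -- `innerSL ℝ` is typed as conjugate-linear, so at `RingHom.id` its application escapes `simp`.
  exact inner_eq_dotProduct_ofLp x z

end Matrix

theorem net_to_sphere_bound_general {n k : ℕ} (Θ : Matrix (Fin k) (Fin n) ℝ)
    (V : Submodule ℝ (Fin n → ℝ)) (N : Set (Fin n → ℝ)) (γ η : ℝ)
    (hγ1 : γ < 1)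
    (hNsub : ∀ y ∈ N, y ∈ V ∧ norm2 y = 1)
    (hNnet : ∀ x ∈ V, norm2 x = 1 → ∃ y ∈ N, norm2 (x - y) ≤ γ)
    (hΘ : ∀ x ∈ N, ∀ y ∈ N, |x ⬝ᵥ y - (Θ.mulVec x) ⬝ᵥ (Θ.mulVec y)| ≤ η) :
    ∀ v ∈ V, norm2 v = 1 →
      |1 - (Θ.mulVec v) ⬝ᵥ (Θ.mulVec v)| ≤ η / (1 - γ) ^ 2 := by
  intro v hv hv1
  have hunit : ‖WithLp.toLp 2 v‖ = 1 := by rwa [norm_eq_norm2_ofLp]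
  have key := abs_apply_unit_le (dotProductDefect Θ)
    (V := V.comap (WithLp.linearEquiv 2 ℝ (Fin n → ℝ)).toLinearMap) (N := WithLp.ofLp ⁻¹' N) hγ1
    (fun y hy => by simpa [norm_eq_norm2_ofLp] using hNsub _ hy)
    (fun x hx hx1 => by
      obtain ⟨y, hy, hxy⟩ := hNnet x.ofLp hx (by rwa [← norm_eq_norm2_ofLp])
      exact ⟨WithLp.toLp 2 y, hy, by simpa [norm_eq_norm2_ofLp] using hxy⟩)
    (fun y hy y' hy' => by simpa [dotProductDefect_apply] using hΘ _ hy _ hy')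
    _ hv hunit _ hv hunit
  have hvv : v ⬝ᵥ v = 1 := Real.sqrt_eq_one.mp hv1
  simpa [dotProductDefect_apply, hvv] using key

/-- If `Θ` approximately preserves inner products on a γ-net of the unit sphere of `V`
up to additive error η, then `|1 - ‖Θ n‖²| ≤ η/(1-γ)²` for every unit vector `n ∈ V`. -/
theorem net_to_sphere_bound {n k : ℕ} (Θ : Matrix (Fin k) (Fin n) ℝ)
    (V : Submodule ℝ (Fin n → ℝ)) (N : Set (Fin n → ℝ)) (γ η : ℝ)
    (hγ0 : 0 < γ) (hγ1 : γ < 1)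
    (hNsub : ∀ y ∈ N, y ∈ V ∧ norm2 y = 1)
    (hNnet : ∀ x ∈ V, norm2 x = 1 → ∃ y ∈ N, norm2 (x - y) ≤ γ)
    (hΘ : ∀ x ∈ N, ∀ y ∈ N, |x ⬝ᵥ y - (Θ.mulVec x) ⬝ᵥ (Θ.mulVec y)| ≤ η) :
    ∀ v ∈ V, norm2 v = 1 →
      |1 - (Θ.mulVec v) ⬝ᵥ (Θ.mulVec v)| ≤ η / (1 - γ) ^ 2 :=
  net_to_sphere_bound_general Θ V N γ η hγ1 hNsub hNnet hΘ
end
end
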